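/- arXiv:2202.10264 — 2 statements merged into one kernel-verified Lean document; each statement's English description precedes it below -/
import Mathlib

section
/- For every p > 0 there exists a constant C₁ > 0 depending on p such that for all β ∈ (0,1] and all f ∈ H^p(ℝⁿ): ‖(I − C_β) f‖²_{L²} ≤ C₁ β^{2(p ∧ s)} ‖f‖²_{H^p}, where p ∧ s = min{p, s}. -/
/-
STATEMENT 7: For every p > 0 there exists C₁ > 0 (depending on p) such that for all
β ∈ (0,1] and all f ∈ H^p(ℝⁿ): ‖(I − C_β) f‖²_{L²} ≤ C₁ β^{2(p ∧ s)} ‖f‖²_{H^p},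
where ‖f‖²_{H^p} = ∫ (1+|ξ|²)^p |f̂(ξ)|² dξ and p ∧ s = min{p, s}.
-/

open MeasureTheory Filter
open scoped Topology ENNReal

noncomputable section

abbrev Rn (n : ℕ) : Type := EuclideanSpace ℝ (Fin n)
abbrev L2 (n : ℕ) : Type := MeasureTheory.Lp ℂ 2 (volume : Measure (Rn n))

/-- The mollification φ_β ⋆ f, where φ_β(x) = β^{−n} φ(x/β). -/
def mollify (n : ℕ) (φ : Rn n → ℝ) (β : ℝ) (f : Rn n → ℂ) (x : Rn n) : ℂ :=
  ∫ y, (((β ^ n)⁻¹ * φ (β⁻¹ • (x - y)) : ℝ) : ℂ) * f y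

/-- φ̂, the Fourier transform of the kernel φ. -/
def phiHat (n : ℕ) (φ : Rn n → ℝ) (ξ : Rn n) : ℂ :=
  FourierTransform.fourier (fun x => (φ x : ℂ)) ξ

open scoped FourierTransform RealInnerProductSpace

namespace Stmt7Aux

variable {n : ℕ}

lemma conv_swap (g f : Rn n → ℂ) (x : Rn n) :
    ∫ y, g (x - y) * f y = ∫ y, g y * f (x - y) := by
  have h := MeasureTheory.integral_sub_left_eq_self (fun y => g y * f (x - y)) volume x
  simpa [sub_sub_cancel] using h


lemma fourier_eq_mul (h : Rn n → ℂ) (ξ : Rn n) :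
    FourierTransform.fourier h ξ = ∫ v, ((𝐞 (-⟪v, ξ⟫) : Circle) : ℂ) * h v := by
  simp only [Real.fourier_eq, Circle.smul_def, smul_eq_mul]

lemma fourier_conv {g f : Rn n → ℂ} (hg : Integrable g (volume : Measure (Rn n)))
    (hf : Integrable f (volume : Measure (Rn n))) (ξ : Rn n) :
    FourierTransform.fourier (fun x => ∫ y, g (x - y) * f y) ξ
      = FourierTransform.fourier g ξ * FourierTransform.fourier f ξ := by
  have hrw : (fun x : Rn n => ∫ y, g (x - y) * f y) = fun x => ∫ y, g y * f (x - y) :=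
    funext fun x => conv_swap g f x
  rw [hrw]
  set e : Rn n → ℂ := fun v => ((𝐞 (-⟪v, ξ⟫) : Circle) : ℂ) with he
  have he_cont : Continuous e :=
    continuous_subtype_val.comp (Real.continuous_fourierChar.comp
      (Continuous.neg (continuous_id.inner continuous_const)))
  have he_norm : ∀ v, ‖e v‖ = 1 := fun v => by simp [he, Circle.norm_coe]
  have hmul : ∀ x y : Rn n, e x = e y * e (x - y) := by
    intro x y
    have harg : (-⟪x, ξ⟫ : ℝ) = -⟪y, ξ⟫ + -⟪x - y, ξ⟫ := by
      rw [inner_sub_left]; ring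
    rw [he]
    simp only
    rw [harg, AddChar.map_add_eq_mul, Circle.coe_mul]
  have hgf : ∀ h : Rn n → ℂ, FourierTransform.fourier h ξ = ∫ v, e v * h v := fun h =>
    fourier_eq_mul h ξ
  have h2 : FourierTransform.fourier (fun x => ∫ y, g y * f (x - y)) ξ
      = ∫ x, ∫ y, e x * (g y * f (x - y)) := by
    rw [hgf]
    congr 1
    funext x
    rw [integral_const_mul]
  have hint : Integrable (fun q : Rn n × Rn n => e q.1 * (g q.2 * f (q.1 - q.2)))
      ((volume : Measure (Rn n)).prod volume) := by
    have h1 : Integrable (fun q : Rn n × Rn n => g q.2 * f (q.1 - q.2))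
        ((volume : Measure (Rn n)).prod volume) := by
      have := hg.convolution_integrand (ContinuousLinearMap.mul ℂ ℂ) hf
      simpa using this
    exact h1.bdd_mul ((he_cont.comp continuous_fst).aestronglyMeasurable)
      (c := 1) (Eventually.of_forall fun q => le_of_eq (he_norm q.1))
  rw [h2, integral_integral_swap hint]
  have h3 : ∀ y : Rn n, (∫ x, e x * (g y * f (x - y)))
      = (e y * g y) * FourierTransform.fourier f ξ := by
    intro y
    have hx : ∀ x : Rn n, e x * (g y * f (x - y)) = (e y * g y) * (e (x - y) * f (x - y)) := by
      intro x; rw [hmul x y]; ring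
    rw [integral_congr_ae (Eventually.of_forall hx), integral_const_mul]
    congr 1
    rw [show (∫ x, e (x - y) * f (x - y)) = ∫ t, e t * f t from by
      simpa using MeasureTheory.integral_sub_right_eq_self (fun t => e t * f t) y]
    exact (hgf f).symm
  calc (∫ y, ∫ x, e x * (g y * f (x - y)))
      = ∫ y, (e y * g y) * FourierTransform.fourier f ξ :=
        integral_congr_ae (Eventually.of_forall h3)
    _ = (∫ y, e y * g y) * FourierTransform.fourier f ξ := integral_mul_const _ _
    _ = FourierTransform.fourier g ξ * FourierTransform.fourier f ξ := by rw [← hgf g]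

lemma fourier_scale (φ : Rn n → ℝ) {β : ℝ} (hβ : 0 < β) (ξ : Rn n) :
    FourierTransform.fourier (fun x : Rn n => (((β ^ n)⁻¹ * φ (β⁻¹ • x) : ℝ) : ℂ)) ξ
      = phiHat n φ (β • ξ) := by
  have hβn : (0:ℝ) < β ^ n := pow_pos hβ n
  set H : Rn n → ℂ := fun u => ((𝐞 (-⟪u, β • ξ⟫) : Circle) : ℂ) * (φ u : ℂ) with hH
  have hphi : phiHat n φ (β • ξ) = ∫ u, H u := by
    rw [hH, phiHat]
    exact fourier_eq_mul _ _
  have key : ∀ x : Rn n, ((𝐞 (-⟪x, ξ⟫) : Circle) : ℂ) * (((β ^ n)⁻¹ * φ (β⁻¹ • x) : ℝ) : ℂ)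
      = (((β ^ n)⁻¹ : ℝ) : ℂ) * H (β⁻¹ • x) := by
    intro x
    rw [hH]
    simp only
    have h1 : ⟪β⁻¹ • x, β • ξ⟫ = ⟪x, ξ⟫ := by
      rw [real_inner_smul_left, real_inner_smul_right, ← mul_assoc,
        inv_mul_cancel₀ hβ.ne', one_mul]
    rw [h1]
    push_cast
    ring
  rw [fourier_eq_mul]
  calc (∫ x, ((𝐞 (-⟪x, ξ⟫) : Circle) : ℂ) * ((((β ^ n)⁻¹ * φ (β⁻¹ • x) : ℝ)) : ℂ))
      = ∫ x, (((β ^ n)⁻¹ : ℝ) : ℂ) * H (β⁻¹ • x) :=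
        integral_congr_ae (Eventually.of_forall fun x => key x)
    _ = (((β ^ n)⁻¹ : ℝ) : ℂ) * ∫ x, H (β⁻¹ • x) := integral_const_mul _ _
    _ = phiHat n φ (β • ξ) := by
        rw [MeasureTheory.Measure.integral_comp_inv_smul volume H β, hphi]
        rw [finrank_euclideanSpace_fin, abs_of_pos hβn]
        rw [Complex.real_smul, ← mul_assoc, ← Complex.ofReal_mul,
          inv_mul_cancel₀ hβn.ne', Complex.ofReal_one, one_mul]

lemma phiHat_zero (φ : Rn n → ℝ) (hφ1 : ∫ x, φ x = 1) : phiHat n φ 0 = 1 := by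
  rw [phiHat, Real.fourier_eq]
  simp only [inner_zero_right, neg_zero, AddChar.map_zero_eq_one, one_smul]
  rw [show (fun v : Rn n => ((φ v : ℝ) : ℂ)) = fun v => (RCLike.ofReal (φ v) : ℂ) from rfl,
    integral_ofReal, hφ1]
  norm_num

lemma phiHat_le (φ : Rn n → ℝ) (hφ1 : ∫ x, φ x = 1)
    (hlt : ∀ ξ : Rn n, ξ ≠ 0 → ‖phiHat n φ ξ‖ < 1) (η : Rn n) : ‖phiHat n φ η‖ ≤ 1 := by
  rcases eq_or_ne η 0 with rfl | h
  · rw [phiHat_zero φ hφ1]; simp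
  · exact (hlt η h).le

lemma norm_sq_L2 (u : L2 n) : ‖u‖ ^ 2 = ∫ ξ, ‖(u : Rn n → ℂ) ξ‖ ^ 2 := by
  calc ‖u‖ ^ 2 = RCLike.re (inner (𝕜 := ℂ) u u) := (inner_self_eq_norm_sq u).symm
    _ = RCLike.re (∫ a, inner (𝕜 := ℂ) ((u : Rn n → ℂ) a) ((u : Rn n → ℂ) a) ∂volume) := by
        rw [L2.inner_def]
    _ = ∫ a, RCLike.re (inner (𝕜 := ℂ) ((u : Rn n → ℂ) a) ((u : Rn n → ℂ) a)) ∂volume :=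
        (integral_re (L2.integrable_inner u u)).symm
    _ = ∫ ξ, ‖(u : Rn n → ℂ) ξ‖ ^ 2 :=
        integral_congr_ae (Eventually.of_forall fun a => inner_self_eq_norm_sq _)

lemma key_bound (φ : Rn n → ℝ) {s : ℝ} (hs : 0 < s) (hφ1 : ∫ x, φ x = 1)
    (hlt : ∀ ξ : Rn n, ξ ≠ 0 → ‖phiHat n φ ξ‖ < 1)
    (hasymp : Tendsto (fun ξ : Rn n => ‖1 - phiHat n φ ξ‖ / ‖ξ‖ ^ s) (𝓝[≠] 0) (𝓝 1)) :
    ∃ K : ℝ, 2 ≤ K ∧ ∀ η : Rn n, ‖1 - phiHat n φ η‖ ≤ K * min 1 (‖η‖ ^ s) := by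
  have hmem : (fun ξ : Rn n => ‖1 - phiHat n φ ξ‖ / ‖ξ‖ ^ s) ⁻¹' (Set.Iio 2)
      ∈ 𝓝[≠] (0 : Rn n) := hasymp (Iio_mem_nhds (by norm_num))
  obtain ⟨ε, hε, hsub⟩ := Metric.mem_nhdsWithin_iff.1 hmem
  set c : ℝ := min 1 (ε ^ s) with hc
  have hc0 : 0 < c := lt_min one_pos (Real.rpow_pos_of_pos hε s)
  have hc1 : c ≤ 1 := min_le_left _ _
  have hK2 : 2 ≤ 2 / c := by
    rw [le_div_iff₀ hc0]; nlinarith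
  refine ⟨2 / c, hK2, fun η => ?_⟩
  have hb2 : ‖1 - phiHat n φ η‖ ≤ 2 := by
    rcases eq_or_ne η 0 with rfl | h
    · rw [phiHat_zero φ hφ1]; simp
    · calc ‖1 - phiHat n φ η‖ ≤ ‖(1:ℂ)‖ + ‖phiHat n φ η‖ := norm_sub_le _ _
        _ ≤ 1 + 1 := by
            have := phiHat_le φ hφ1 hlt η
            simp only [norm_one]
            linarith
        _ = 2 := by norm_num
  rcases eq_or_ne η 0 with rfl | hne
  · rw [phiHat_zero φ hφ1]
    simp only [sub_self, norm_zero]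
    positivity
  · have hηpos : 0 < ‖η‖ := norm_pos_iff.2 hne
    rcases le_or_gt ε ‖η‖ with hge | hlt'
    · have hcmin : c ≤ min 1 (‖η‖ ^ s) :=
        min_le_min le_rfl (Real.rpow_le_rpow hε.le hge hs.le)
      calc ‖1 - phiHat n φ η‖ ≤ 2 := hb2
        _ = (2 / c) * c := by field_simp
        _ ≤ (2 / c) * min 1 (‖η‖ ^ s) := by
            apply mul_le_mul_of_nonneg_left hcmin (by positivity)
    · have hrat : ‖1 - phiHat n φ η‖ / ‖η‖ ^ s < 2 := by
        apply hsub
        constructor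
        · rw [Metric.mem_ball, dist_zero_right]; exact hlt'
        · exact hne
      have hpows : (0:ℝ) < ‖η‖ ^ s := Real.rpow_pos_of_pos hηpos s
      have h2 : ‖1 - phiHat n φ η‖ ≤ 2 * ‖η‖ ^ s := by
        rw [div_lt_iff₀ hpows] at hrat; linarith
      rcases le_or_gt (‖η‖ ^ s) 1 with h1 | h1
      · rw [min_eq_right h1]
        calc ‖1 - phiHat n φ η‖ ≤ 2 * ‖η‖ ^ s := h2
          _ ≤ (2 / c) * ‖η‖ ^ s := by
              apply mul_le_mul_of_nonneg_right hK2 hpows.le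
      · rw [min_eq_left h1.le]
        calc ‖1 - phiHat n φ η‖ ≤ 2 := hb2
          _ ≤ (2 / c) * 1 := by rw [mul_one]; exact hK2

end Stmt7Aux

open Stmt7Aux

theorem stmt7
    (n : ℕ) (hn : 0 < n) (s : ℝ) (hs : 0 < s)
    (φ : Rn n → ℝ) (hφint : Integrable φ (volume : Measure (Rn n)))
    (hφ1 : ∫ x, φ x = 1)
    (hreal : ∀ ξ : Rn n, (phiHat n φ ξ).im = 0)
    (hdec : ∀ ξ η : Rn n, ‖ξ‖ ≤ ‖η‖ → (phiHat n φ η).re ≤ (phiHat n φ ξ).re)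
    (hlt : ∀ ξ : Rn n, ξ ≠ 0 → ‖phiHat n φ ξ‖ < 1)
    (hasymp : Tendsto (fun ξ : Rn n => ‖1 - phiHat n φ ξ‖ / ‖ξ‖ ^ s) (𝓝[≠] 0) (𝓝 1))
    -- the Fourier–Plancherel transform on L², used to express the H^p norm
    (F : L2 n ≃ₗᵢ[ℂ] L2 n)
    (hF : ∀ f : L2 n, Integrable (⇑f) volume →
      ⇑(F f) =ᵐ[volume] FourierTransform.fourier (⇑f))
    -- the convolution operators C_β
    (C : ℝ → (L2 n →L[ℂ] L2 n))
    (hC : ∀ β : ℝ, 0 < β → ∀ f : L2 n, ⇑(C β f) =ᵐ[volume] mollify n φ β ⇑f)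
    (p : ℝ) (hp : 0 < p) :
    ∃ C₁ : ℝ, 0 < C₁ ∧
      ∀ β ∈ Set.Ioc (0 : ℝ) 1, ∀ f : L2 n,
        Integrable (fun ξ : Rn n => (1 + ‖ξ‖ ^ 2) ^ p * ‖(F f : Rn n → ℂ) ξ‖ ^ 2) volume →
        ‖f - C β f‖ ^ 2 ≤
          C₁ * β ^ (2 * min p s) *
            ∫ ξ : Rn n, (1 + ‖ξ‖ ^ 2) ^ p * ‖(F f : Rn n → ℂ) ξ‖ ^ 2 := by
  obtain ⟨K, hK2, hKbound⟩ := key_bound φ hs hφ1 hlt hasymp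
  have hK0 : 0 < K := lt_of_lt_of_le (by norm_num) hK2
  set mm : ℝ := min p s with hmmdef
  have hmm0 : 0 < mm := lt_min hp hs
  have hmms : mm ≤ s := min_le_right _ _
  have hmmp : mm ≤ p := min_le_left _ _
  have hmin : ∀ t : ℝ, 0 ≤ t → min 1 (t ^ s) ≤ t ^ mm := by
    intro t ht
    rcases eq_or_lt_of_le ht with h0 | h0
    · rw [← h0, Real.zero_rpow hs.ne', Real.zero_rpow hmm0.ne']
      simp
    · rcases le_or_gt t 1 with h1 | h1
      · exact (min_le_right _ _).trans (Real.rpow_le_rpow_of_exponent_ge h0 h1 hmms)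
      · refine (min_le_left _ _).trans ?_
        rw [show (1:ℝ) = 1 ^ mm by rw [Real.one_rpow]]
        exact Real.rpow_le_rpow zero_le_one h1.le hmm0.le
  have hphiHat_cont : Continuous (phiHat n φ) :=
    VectorFourier.fourierIntegral_continuous Real.continuous_fourierChar
      (innerSL ℝ).continuous₂ (hφint.ofReal (𝕜 := ℂ))
  refine ⟨K ^ 2, by positivity, ?_⟩
  rintro β ⟨hβ0, hβ1⟩ f hfw
  -- pointwise multiplier bound
  have hpt : ∀ ξ : Rn n,
      ‖1 - phiHat n φ (β • ξ)‖ ^ 2 ≤ K ^ 2 * β ^ (2 * mm) * (1 + ‖ξ‖ ^ 2) ^ p := by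
    intro ξ
    have ht0 : (0:ℝ) ≤ β * ‖ξ‖ := by positivity
    have hη : ‖β • ξ‖ = β * ‖ξ‖ := by
      rw [norm_smul, Real.norm_eq_abs, abs_of_pos hβ0]
    have h1 : ‖1 - phiHat n φ (β • ξ)‖ ≤ K * min 1 ((β * ‖ξ‖) ^ s) := by
      have := hKbound (β • ξ)
      rwa [hη] at this
    have h2 : min 1 ((β * ‖ξ‖) ^ s) ≤ (β * ‖ξ‖) ^ mm := hmin _ ht0
    have h3 : (β * ‖ξ‖) ^ mm = β ^ mm * ‖ξ‖ ^ mm := Real.mul_rpow hβ0.le (norm_nonneg ξ)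
    have h4 : ‖ξ‖ ^ mm ≤ (1 + ‖ξ‖ ^ 2) ^ (p / 2) := by
      have e1 : ‖ξ‖ ^ mm = (‖ξ‖ ^ 2) ^ (mm / 2) := by
        rw [← Real.rpow_natCast ‖ξ‖ 2, ← Real.rpow_mul (norm_nonneg ξ),
          show ((2:ℕ):ℝ) * (mm / 2) = mm by push_cast; ring]
      rw [e1]
      calc (‖ξ‖ ^ 2) ^ (mm / 2) ≤ (1 + ‖ξ‖ ^ 2) ^ (mm / 2) := by
            apply Real.rpow_le_rpow (by positivity) (by nlinarith [sq_nonneg ‖ξ‖]) (by linarith)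
        _ ≤ (1 + ‖ξ‖ ^ 2) ^ (p / 2) := by
            apply Real.rpow_le_rpow_of_exponent_le (by nlinarith [sq_nonneg ‖ξ‖]) (by linarith)
    have h5 : ‖1 - phiHat n φ (β • ξ)‖ ≤ K * (β ^ mm * (1 + ‖ξ‖ ^ 2) ^ (p / 2)) := by
      calc ‖1 - phiHat n φ (β • ξ)‖ ≤ K * min 1 ((β * ‖ξ‖) ^ s) := h1
        _ ≤ K * (β ^ mm * ‖ξ‖ ^ mm) := by
            rw [← h3]
            exact mul_le_mul_of_nonneg_left h2 hK0.le
        _ ≤ K * (β ^ mm * (1 + ‖ξ‖ ^ 2) ^ (p / 2)) := by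
            apply mul_le_mul_of_nonneg_left _ hK0.le
            exact mul_le_mul_of_nonneg_left h4 (by positivity)
    calc ‖1 - phiHat n φ (β • ξ)‖ ^ 2 ≤ (K * (β ^ mm * (1 + ‖ξ‖ ^ 2) ^ (p / 2))) ^ 2 :=
          pow_le_pow_left₀ (norm_nonneg _) h5 2
      _ = K ^ 2 * β ^ (2 * mm) * (1 + ‖ξ‖ ^ 2) ^ p := by
          have e2 : (β ^ mm) ^ 2 = β ^ (2 * mm) := by
            rw [← Real.rpow_natCast (β ^ mm) 2, ← Real.rpow_mul hβ0.le,
              show mm * ((2:ℕ):ℝ) = 2 * mm by push_cast; ring]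
          have e3 : ((1 + ‖ξ‖ ^ 2) ^ (p / 2)) ^ 2 = (1 + ‖ξ‖ ^ 2) ^ p := by
            rw [← Real.rpow_natCast ((1 + ‖ξ‖ ^ 2) ^ (p / 2)) 2,
              ← Real.rpow_mul (by positivity : (0:ℝ) ≤ 1 + ‖ξ‖ ^ 2),
              show p / 2 * ((2:ℕ):ℝ) = p by push_cast; ring]
          rw [mul_pow, mul_pow, e2, e3, mul_assoc]
  -- the Fourier multiplier m
  set m : Rn n → ℂ := fun ξ => phiHat n φ (β • ξ) with hm
  have hm_cont : Continuous m := hphiHat_cont.comp (continuous_const_smul β)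
  have hm_le : ∀ ξ, ‖m ξ‖ ≤ 1 := fun ξ => phiHat_le φ hφ1 hlt _
  have hmem : ∀ g : L2 n, MemLp (fun ξ => m ξ * (g : Rn n → ℂ) ξ) 2 volume := fun g =>
    MemLp.of_le (Lp.memLp g) (hm_cont.aestronglyMeasurable.mul (Lp.aestronglyMeasurable g))
      (Eventually.of_forall fun ξ => by
        rw [norm_mul]
        exact mul_le_of_le_one_left (norm_nonneg _) (hm_le ξ))
  set Φ : L2 n → L2 n := fun g => MemLp.toLp _ (hmem g) with hΦ
  have hΦcoe : ∀ g : L2 n, ⇑(Φ g) =ᵐ[volume] fun ξ => m ξ * (g : Rn n → ℂ) ξ := fun g =>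
    MemLp.coeFn_toLp _
  have hΦlip : LipschitzWith 1 Φ := by
    refine LipschitzWith.of_dist_le_mul fun g g' => ?_
    rw [NNReal.coe_one, one_mul, dist_eq_norm, dist_eq_norm]
    have hsub : Φ g - Φ g' = MemLp.toLp
        ((fun ξ => m ξ * (g : Rn n → ℂ) ξ) - fun ξ => m ξ * (g' : Rn n → ℂ) ξ)
        ((hmem g).sub (hmem g')) := (MemLp.toLp_sub (hmem g) (hmem g')).symm
    rw [hsub, Lp.norm_toLp, Lp.norm_def]
    have hb : eLpNorm ((fun ξ => m ξ * (g : Rn n → ℂ) ξ) - fun ξ => m ξ * (g' : Rn n → ℂ) ξ)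
        2 volume ≤ eLpNorm (⇑(g - g')) 2 volume := by
      rw [eLpNorm_congr_ae (Lp.coeFn_sub g g')]
      apply eLpNorm_mono
      intro ξ
      simp only [Pi.sub_apply]
      rw [← mul_sub, norm_mul]
      exact mul_le_of_le_one_left (norm_nonneg _) (hm_le ξ)
    exact ENNReal.toReal_mono (Lp.eLpNorm_ne_top (g - g')) hb
  -- the key identity on integrable functions
  have hkey_int : ∀ f : L2 n, Integrable (⇑f) volume → F (C β f) = Φ (F f) := by
    intro f hfint
    set gβ : Rn n → ℂ := fun x => (((β ^ n)⁻¹ * φ (β⁻¹ • x) : ℝ) : ℂ) with hgβ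
    have hgβint : Integrable gβ volume := by
      have h1 : Integrable (fun x : Rn n => φ (β⁻¹ • x)) volume :=
        (integrable_comp_smul_iff volume φ (inv_ne_zero hβ0.ne')).2 hφint
      exact (h1.const_mul ((β ^ n)⁻¹)).ofReal
    have hmoll_eq : ∀ x, convolution gβ (⇑f) (ContinuousLinearMap.mul ℂ ℂ) volume x
        = mollify n φ β (⇑f) x := by
      intro x
      rw [convolution_def]
      simp only [ContinuousLinearMap.mul_apply']
      rw [← conv_swap gβ (⇑f) x]
      rfl
    have hmoll_int : Integrable (mollify n φ β ⇑f) volume := by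
      have hconv := hgβint.integrable_convolution (ContinuousLinearMap.mul ℂ ℂ) hfint
      exact hconv.congr (Eventually.of_forall hmoll_eq)
    have hCβint : Integrable (⇑(C β f)) volume := hmoll_int.congr (hC β hβ0 f).symm
    apply Lp.ext
    have e1 : ⇑(F (C β f)) =ᵐ[volume] FourierTransform.fourier (⇑(C β f)) := hF _ hCβint
    have e2 : ∀ ξ, FourierTransform.fourier (⇑(C β f)) ξ = m ξ * FourierTransform.fourier (⇑f) ξ := by
      intro ξ
      have hcongr : FourierTransform.fourier (⇑(C β f)) ξ
          = FourierTransform.fourier (mollify n φ β ⇑f) ξ := by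
        rw [Real.fourier_eq, Real.fourier_eq]
        exact integral_congr_ae ((hC β hβ0 f).mono fun x hx => by simp only [hx])
      rw [hcongr]
      have hmf : mollify n φ β ⇑f = fun x => ∫ y, gβ (x - y) * (⇑f) y := rfl
      rw [hmf, fourier_conv hgβint hfint ξ, fourier_scale φ hβ0 ξ]
    have e3 : ⇑(Φ (F f)) =ᵐ[volume] fun ξ => m ξ * FourierTransform.fourier (⇑f) ξ := by
      filter_upwards [hΦcoe (F f), hF f hfint] with ξ h1 h2
      rw [h1, h2]
    filter_upwards [e1, e3] with ξ h1 h2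
    rw [h1, e2 ξ, h2]
  -- extend to all of L² by density
  have hCcont : Continuous fun u : L2 n => F (C β u) := F.continuous.comp (C β).continuous
  have hRcont : Continuous fun u : L2 n => Φ (F u) := hΦlip.continuous.comp F.continuous
  have hkey : ∀ f : L2 n, F (C β f) = Φ (F f) := by
    intro f
    refine DenseRange.induction_on
      (Lp.simpleFunc.denseRange (E := ℂ) (p := 2) (μ := (volume : Measure (Rn n)))
        (by norm_num))
      (p := fun u : L2 n => F (C β u) = Φ (F u)) f (isClosed_eq hCcont hRcont) ?_
    intro sf
    apply hkey_int
    have h1 := Lp.simpleFunc.toSimpleFunc_eq_toFun sf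
    have h2 : MemLp (⇑(Lp.simpleFunc.toSimpleFunc sf)) 2 volume :=
      MemLp.ae_eq h1.symm (Lp.memLp _)
    have h3 : Integrable (⇑(Lp.simpleFunc.toSimpleFunc sf)) volume :=
      (SimpleFunc.memLp_iff_integrable (by norm_num) (by norm_num)).1 h2
    exact h3.congr h1
  -- main estimate
  have heq1 : ‖f - C β f‖ ^ 2
      = ∫ ξ, ‖(F f : Rn n → ℂ) ξ - m ξ * (F f : Rn n → ℂ) ξ‖ ^ 2 := by
    have hn1 : ‖f - C β f‖ = ‖F f - Φ (F f)‖ := by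
      rw [← F.norm_map (f - C β f), map_sub, hkey f]
    rw [hn1, norm_sq_L2]
    refine integral_congr_ae ?_
    filter_upwards [Lp.coeFn_sub (F f) (Φ (F f)), hΦcoe (F f)] with ξ h1 h2
    rw [h1]
    simp only [Pi.sub_apply]
    rw [h2]
  rw [heq1]
  calc (∫ ξ, ‖(F f : Rn n → ℂ) ξ - m ξ * (F f : Rn n → ℂ) ξ‖ ^ 2)
      ≤ ∫ ξ, (K ^ 2 * β ^ (2 * mm)) * ((1 + ‖ξ‖ ^ 2) ^ p * ‖(F f : Rn n → ℂ) ξ‖ ^ 2) := by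
        apply integral_mono_of_nonneg
        · exact Eventually.of_forall fun ξ => by positivity
        · exact hfw.const_mul _
        · refine Eventually.of_forall fun ξ => ?_
          dsimp only
          have hfactor : (F f : Rn n → ℂ) ξ - m ξ * (F f : Rn n → ℂ) ξ
              = (1 - m ξ) * (F f : Rn n → ℂ) ξ := by ring
          rw [hfactor, norm_mul, mul_pow]
          calc ‖1 - m ξ‖ ^ 2 * ‖(F f : Rn n → ℂ) ξ‖ ^ 2
              ≤ (K ^ 2 * β ^ (2 * mm) * (1 + ‖ξ‖ ^ 2) ^ p) * ‖(F f : Rn n → ℂ) ξ‖ ^ 2 :=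
                mul_le_mul_of_nonneg_right (hpt ξ) (by positivity)
            _ = (K ^ 2 * β ^ (2 * mm)) * ((1 + ‖ξ‖ ^ 2) ^ p * ‖(F f : Rn n → ℂ) ξ‖ ^ 2) := by
                ring
    _ = K ^ 2 * β ^ (2 * mm) * ∫ ξ, (1 + ‖ξ‖ ^ 2) ^ p * ‖(F f : Rn n → ℂ) ξ‖ ^ 2 :=
        integral_const_mul _ _
end
end

section
/- For every p > 0 there exists a constant C₂ > 0 depending on p such that for all β ∈ (0,1] and all f ∈ H^{2p}(ℝⁿ): ‖(I − C_β)*(I − C_β) f‖²_{L²} ≤ C₂ β^{4(p ∧ s)} ‖f‖²_{H^{2p}}, where p ∧ s = min{p, s} and (I − C_β)* is the L²-adjoint of I − C_β. -/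
/-
STATEMENT 8: For every p > 0 there exists C₂ > 0 (depending on p) such that for all
β ∈ (0,1] and all f ∈ H^{2p}(ℝⁿ):
‖(I − C_β)*(I − C_β) f‖²_{L²} ≤ C₂ β^{4(p ∧ s)} ‖f‖²_{H^{2p}},
where ‖f‖²_{H^{2p}} = ∫ (1+|ξ|²)^{2p} |f̂(ξ)|² dξ, p ∧ s = min{p, s} and (I − C_β)*
is the L²-adjoint of I − C_β.
-/

open MeasureTheory Filter ContinuousLinearMap
open scoped Topology ENNReal
open scoped FourierTransform RealInnerProductSpace ComplexConjugate

noncomputable section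

variable {n : ℕ}

def eker (ξ v : Rn n) : ℂ := Complex.exp (((-2 * Real.pi * ⟪v, ξ⟫ : ℝ) : ℂ) * Complex.I)

lemma eker_norm (ξ v : Rn n) : ‖eker ξ v‖ = 1 := by
  rw [eker]
  exact Complex.norm_exp_ofReal_mul_I _

lemma eker_cont (ξ : Rn n) : Continuous (eker ξ) := by
  apply Complex.continuous_exp.comp
  refine Continuous.mul (Complex.continuous_ofReal.comp ?_) continuous_const
  exact continuous_const.mul (continuous_id.inner continuous_const)

lemma eker_add (ξ v w : Rn n) : eker ξ (v + w) = eker ξ v * eker ξ w := by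
  rw [eker, eker, eker, ← Complex.exp_add, ← add_mul]
  norm_cast
  rw [inner_add_left]
  ring_nf

lemma fourierIntegral_eq_eker (f : Rn n → ℂ) (ξ : Rn n) :
    𝓕 f ξ = ∫ v, eker ξ v * f v := by
  rw [Real.fourier_eq']
  simp only [smul_eq_mul, eker, neg_mul]

lemma fourier_conv {f g : Rn n → ℂ} (hf : Integrable f) (hg : Integrable g) (ξ : Rn n) :
    𝓕 (fun x => ∫ y, f y * g (x - y)) ξ = 𝓕 f ξ * 𝓕 g ξ := by
  have h0 : Integrable (fun q : Rn n × Rn n => f q.2 * g (q.1 - q.2))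
      (volume.prod volume) := by
    have := hf.convolution_integrand (ContinuousLinearMap.mul ℂ ℂ) hg
    simpa using this
  have hint : Integrable (fun q : Rn n × Rn n => eker ξ q.1 * (f q.2 * g (q.1 - q.2)))
      (volume.prod volume) :=
    h0.bdd_mul ((eker_cont ξ).comp continuous_fst).aestronglyMeasurable
      (c := 1) (Filter.Eventually.of_forall fun q => le_of_eq (eker_norm _ _))
  calc 𝓕 (fun x => ∫ y, f y * g (x - y)) ξ
      = ∫ x, eker ξ x * ∫ y, f y * g (x - y) := fourierIntegral_eq_eker _ ξ
    _ = ∫ x, ∫ y, eker ξ x * (f y * g (x - y)) := by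
        congr 1; funext x; rw [integral_const_mul]
    _ = ∫ y, ∫ x, eker ξ x * (f y * g (x - y)) := integral_integral_swap hint
    _ = ∫ y, ∫ x, eker ξ (x + y) * (f y * g ((x + y) - y)) := by
        congr 1; funext y
        exact (integral_add_right_eq_self (fun x => eker ξ x * (f y * g (x - y))) y).symm
    _ = ∫ y, (eker ξ y * f y) * ∫ x, eker ξ x * g x := by
        congr 1; funext y
        rw [← integral_const_mul]
        congr 1; funext x
        rw [add_sub_cancel_right, eker_add]; ring
    _ = (∫ y, eker ξ y * f y) * ∫ x, eker ξ x * g x := integral_mul_const _ _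
    _ = 𝓕 f ξ * 𝓕 g ξ := by rw [fourierIntegral_eq_eker, fourierIntegral_eq_eker]

lemma fourier_scale {φ : Rn n → ℝ} {β : ℝ} (hβ : 0 < β) (ξ : Rn n) :
    𝓕 (fun x : Rn n => (((β ^ n)⁻¹ * φ (β⁻¹ • x) : ℝ) : ℂ)) ξ = phiHat n φ (β • ξ) := by
  have hβn : (0:ℝ) < β ^ n := pow_pos hβ n
  have key : ∀ x : Rn n, eker ξ x * (((β ^ n)⁻¹ * φ (β⁻¹ • x) : ℝ) : ℂ)
      = ((β ^ n)⁻¹ : ℝ) • (fun u => eker (β • ξ) u * ((φ u : ℝ) : ℂ)) (β⁻¹ • x) := by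
    intro x
    have hx : β • (β⁻¹ • x) = x := by
      rw [smul_smul, mul_inv_cancel₀ (ne_of_gt hβ), one_smul]
    have hinner : ⟪x, ξ⟫ = ⟪β⁻¹ • x, β • ξ⟫ := by
      rw [real_inner_smul_right, ← hx, real_inner_smul_left, hx]
    simp only [eker, hinner]
    rw [Complex.real_smul]
    push_cast
    ring
  rw [fourierIntegral_eq_eker]
  simp only [key]
  rw [integral_smul, MeasureTheory.Measure.integral_comp_smul (μ := volume)
    (fun u => eker (β • ξ) u * ((φ u : ℝ) : ℂ)) β⁻¹]
  rw [phiHat, fourierIntegral_eq_eker]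
  rw [finrank_euclideanSpace_fin]
  have h1 : |((β⁻¹ ^ n)⁻¹ : ℝ)| = β ^ n := by
    rw [← inv_pow, inv_inv, abs_of_pos hβn]
  rw [h1, smul_smul, inv_mul_cancel₀ (ne_of_gt hβn), one_smul]

lemma phiHat_zero {φ : Rn n → ℝ} (hφ1 : ∫ x, φ x = 1) : phiHat n φ 0 = 1 := by
  rw [phiHat, fourierIntegral_eq_eker]
  have : ∀ v : Rn n, eker (0 : Rn n) v * ((φ v : ℝ) : ℂ) = ((φ v : ℝ) : ℂ) := by
    intro v
    simp [eker, inner_zero_right]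
  simp only [this]
  rw [show (∫ v : Rn n, ((φ v : ℝ) : ℂ)) = ((∫ v, φ v : ℝ) : ℂ) from integral_ofReal, hφ1]
  norm_num

lemma phiHat_cont {φ : Rn n → ℝ} (hφint : Integrable φ (volume : Measure (Rn n))) :
    Continuous (phiHat n φ) := by
  unfold phiHat
  have hL : Continuous fun p : Rn n × Rn n => (innerₗ (Rn n)) p.1 p.2 := by
    have h2 : (fun p : Rn n × Rn n => (innerₗ (Rn n)) p.1 p.2)
        = fun p : Rn n × Rn n => (⟪p.1, p.2⟫ : ℝ) := rfl
    rw [h2]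
    exact continuous_inner (𝕜 := ℝ) (E := Rn n)
  exact VectorFourier.fourierIntegral_continuous Real.continuous_fourierChar hL (hφint.ofReal (𝕜 := ℂ))

lemma phiHat_norm_le {φ : Rn n → ℝ} (hφ1 : ∫ x, φ x = 1)
    (hlt : ∀ ξ : Rn n, ξ ≠ 0 → ‖phiHat n φ ξ‖ < 1) (ξ : Rn n) : ‖phiHat n φ ξ‖ ≤ 1 := by
  by_cases h : ξ = 0
  · rw [h, phiHat_zero hφ1, norm_one]
  · exact (hlt ξ h).le

lemma one_sub_phiHat_le_two {φ : Rn n → ℝ} (hφ1 : ∫ x, φ x = 1)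
    (hlt : ∀ ξ : Rn n, ξ ≠ 0 → ‖phiHat n φ ξ‖ < 1) (ξ : Rn n) :
    ‖1 - phiHat n φ ξ‖ ≤ 2 := by
  calc ‖1 - phiHat n φ ξ‖ ≤ ‖(1:ℂ)‖ + ‖phiHat n φ ξ‖ := norm_sub_le _ _
    _ ≤ 1 + 1 := by rw [norm_one]; linarith [phiHat_norm_le hφ1 hlt ξ]
    _ = 2 := by norm_num

lemma kernel_bound {φ : Rn n → ℝ} {s : ℝ} (hs : 0 < s) (hφ1 : ∫ x, φ x = 1)
    (hlt : ∀ ξ : Rn n, ξ ≠ 0 → ‖phiHat n φ ξ‖ < 1)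
    (hasymp : Tendsto (fun ξ : Rn n => ‖1 - phiHat n φ ξ‖ / ‖ξ‖ ^ s) (𝓝[≠] 0) (𝓝 1)) :
    ∃ K : ℝ, 1 ≤ K ∧ ∀ η : Rn n, ‖1 - phiHat n φ η‖ ≤ K * min 1 (‖η‖ ^ s) := by
  have hev : ∀ᶠ η in 𝓝[≠] (0 : Rn n), ‖1 - phiHat n φ η‖ / ‖η‖ ^ s < 2 :=
    hasymp.eventually (Filter.Tendsto.eventually_lt_const (by norm_num) tendsto_id)
  rw [eventually_nhdsWithin_iff, Metric.eventually_nhds_iff] at hev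
  obtain ⟨ε, hε, hball⟩ := hev
  set c : ℝ := min 1 ((ε / 2) ^ s) with hc
  have hc0 : 0 < c := lt_min one_pos (Real.rpow_pos_of_pos (by linarith) s)
  have hc1 : c ≤ 1 := min_le_left _ _
  refine ⟨2 / c, by rw [le_div_iff₀ hc0]; linarith, fun η => ?_⟩
  have hK2 : (2:ℝ) ≤ 2 / c := by rw [le_div_iff₀ hc0]; nlinarith
  by_cases hη : η = 0
  · simp [hη, phiHat_zero hφ1, Real.zero_rpow (ne_of_gt hs)]
  have hηn : (0:ℝ) < ‖η‖ := norm_pos_iff.mpr hη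
  by_cases hsmall : ‖η‖ ≤ ε / 2
  · have hlt2 : ‖1 - phiHat n φ η‖ / ‖η‖ ^ s < 2 := by
      exact hball (by rw [dist_zero_right]; linarith) hη
    have h2 : ‖1 - phiHat n φ η‖ ≤ 2 * ‖η‖ ^ s := by
      rw [div_lt_iff₀ (Real.rpow_pos_of_pos hηn s)] at hlt2
      linarith
    rcases le_or_gt (‖η‖ ^ s) 1 with h1 | h1
    · rw [min_eq_right h1]
      calc ‖1 - phiHat n φ η‖ ≤ 2 * ‖η‖ ^ s := h2
        _ ≤ 2 / c * ‖η‖ ^ s := by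
          apply mul_le_mul_of_nonneg_right hK2 (Real.rpow_nonneg (norm_nonneg _) s)
    · rw [min_eq_left h1.le]
      calc ‖1 - phiHat n φ η‖ ≤ 2 := one_sub_phiHat_le_two hφ1 hlt η
        _ ≤ 2 / c * 1 := by rw [mul_one]; exact hK2
  · push_neg at hsmall
    have hmin : c ≤ min 1 (‖η‖ ^ s) := by
      apply le_min (min_le_left _ _)
      calc c ≤ (ε / 2) ^ s := min_le_right _ _
        _ ≤ ‖η‖ ^ s := Real.rpow_le_rpow (by linarith) hsmall.le hs.le
    calc ‖1 - phiHat n φ η‖ ≤ 2 := one_sub_phiHat_le_two hφ1 hlt η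
      _ = 2 / c * c := by field_simp
      _ ≤ 2 / c * min 1 (‖η‖ ^ s) := by
        apply mul_le_mul_of_nonneg_left hmin (by positivity)

lemma min_rpow_le {m s u : ℝ} (hm : 0 < m) (hms : m ≤ s) (hu : 0 ≤ u) :
    min 1 (u ^ s) ≤ u ^ m := by
  rcases eq_or_lt_of_le hu with h0 | h0
  · rw [← h0, Real.zero_rpow (by linarith : s ≠ 0), Real.zero_rpow (ne_of_gt hm)]
    simp
  rcases le_or_gt u 1 with h1 | h1
  · calc min 1 (u ^ s) ≤ u ^ s := min_le_right _ _
      _ ≤ u ^ m := Real.rpow_le_rpow_of_exponent_ge h0 h1 hms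
  · calc min 1 (u ^ s) ≤ 1 := min_le_left _ _
      _ ≤ u ^ m := Real.one_le_rpow h1.le hm.le

section mulLp

variable {w : Rn n → ℂ}

def mulMem (hw : Continuous w) (hb : ∀ ξ, ‖w ξ‖ ≤ 2) (f : L2 n) :
    MemLp (fun ξ => w ξ * f ξ) 2 (volume : Measure (Rn n)) :=
  (Lp.memLp f).of_le_mul (hw.aestronglyMeasurable.mul (Lp.aestronglyMeasurable f))
    (Filter.Eventually.of_forall fun ξ => by
      rw [norm_mul]
      exact mul_le_mul_of_nonneg_right (hb ξ) (norm_nonneg _))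

def mulLp (hw : Continuous w) (hb : ∀ ξ, ‖w ξ‖ ≤ 2) (f : L2 n) : L2 n :=
  (mulMem hw hb f).toLp _

lemma mulLp_coe (hw : Continuous w) (hb : ∀ ξ, ‖w ξ‖ ≤ 2) (f : L2 n) :
    ⇑(mulLp hw hb f) =ᵐ[volume] fun ξ => w ξ * f ξ :=
  (mulMem hw hb f).coeFn_toLp

lemma mulLp_lip (hw : Continuous w) (hb : ∀ ξ, ‖w ξ‖ ≤ 2) :
    LipschitzWith 2 (mulLp hw hb) := by
  apply LipschitzWith.of_dist_le_mul
  intro f g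
  rw [dist_eq_norm, dist_eq_norm]
  have hcoe : ⇑(mulLp hw hb f - mulLp hw hb g)
      =ᵐ[volume] fun ξ => w ξ * (⇑(f - g) ξ) := by
    filter_upwards [Lp.coeFn_sub (mulLp hw hb f) (mulLp hw hb g),
      mulLp_coe hw hb f, mulLp_coe hw hb g, Lp.coeFn_sub f g] with ξ h1 h2 h3 h4
    rw [h1, Pi.sub_apply, h2, h3, h4, Pi.sub_apply, mul_sub]
  rw [Lp.norm_def, Lp.norm_def, eLpNorm_congr_ae hcoe]
  have hle : eLpNorm (fun ξ => w ξ * (⇑(f - g) ξ)) 2 volume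
      ≤ eLpNorm ((2:ℂ) • ⇑(f - g)) 2 volume := by
    apply eLpNorm_mono_ae
    filter_upwards with ξ
    rw [Pi.smul_apply, smul_eq_mul, norm_mul, norm_mul]
    apply mul_le_mul_of_nonneg_right _ (norm_nonneg _)
    simpa using hb ξ
  have heq : eLpNorm ((2:ℂ) • ⇑(f - g)) 2 volume = 2 * eLpNorm (⇑(f - g)) 2 volume := by
    rw [eLpNorm_const_smul, ← ofReal_norm_eq_enorm]
    norm_num
  calc (eLpNorm (fun ξ => w ξ * (⇑(f - g) ξ)) 2 volume).toReal
      ≤ (2 * eLpNorm (⇑(f - g)) 2 volume).toReal := by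
        apply ENNReal.toReal_mono
        · exact ENNReal.mul_ne_top (by norm_num) (Lp.eLpNorm_ne_top (f - g))
        · rw [← heq]; exact hle
    _ = 2 * (eLpNorm (⇑(f - g)) 2 volume).toReal := by
        rw [ENNReal.toReal_mul]; norm_num

end mulLp

lemma L2_norm_sq (X : L2 n) : ‖X‖ ^ 2 = ∫ ξ, ‖X ξ‖ ^ 2 := by
  rw [← @inner_self_eq_norm_sq ℂ _ _ _ _ X, L2.inner_def,
    ← integral_re (L2.integrable_inner X X)]
  congr 1
  funext ξ
  rw [← @inner_self_eq_norm_sq ℂ]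

lemma fourierIntegral_congr_ae {f g : Rn n → ℂ} (h : f =ᵐ[volume] g) : 𝓕 f = 𝓕 g := by
  funext ξ
  rw [fourierIntegral_eq_eker, fourierIntegral_eq_eker]
  apply integral_congr_ae
  filter_upwards [h] with x hx
  rw [hx]

lemma F_mul_identity
    {φ : Rn n → ℝ} (hφint : Integrable φ (volume : Measure (Rn n)))
    (F : L2 n ≃ₗᵢ[ℂ] L2 n)
    (hF : ∀ f : L2 n, Integrable (⇑f) volume →
      ⇑(F f) =ᵐ[volume] FourierTransform.fourier (⇑f))
    (C : ℝ → (L2 n →L[ℂ] L2 n))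
    (hC : ∀ β : ℝ, 0 < β → ∀ f : L2 n, ⇑(C β f) =ᵐ[volume] mollify n φ β ⇑f)
    {β : ℝ} (hβ : 0 < β)
    (hψc : Continuous (fun ξ : Rn n => phiHat n φ (β • ξ)))
    (hψb : ∀ ξ : Rn n, ‖phiHat n φ (β • ξ)‖ ≤ 2) :
    ∀ f : L2 n, F (C β f) = mulLp hψc hψb (F f) := by
  have hg : Integrable (fun x : Rn n => (((β ^ n)⁻¹ * φ (β⁻¹ • x) : ℝ) : ℂ)) volume := by
    have h1 : Integrable (fun x : Rn n => φ (β⁻¹ • x)) volume := by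
      rw [integrable_comp_smul_iff volume φ (inv_ne_zero (ne_of_gt hβ))]
      exact hφint
    exact (h1.const_mul ((β ^ n)⁻¹)).ofReal (𝕜 := ℂ)
  have key : ∀ f : L2 n, Integrable (⇑f) volume → F (C β f) = mulLp hψc hψb (F f) := by
    intro f hfint
    have hmoll : mollify n φ β ⇑f = fun x =>
        ∫ y, ⇑f y * (((β ^ n)⁻¹ * φ (β⁻¹ • (x - y)) : ℝ) : ℂ) := by
      funext x
      unfold mollify
      exact integral_congr_ae (Filter.Eventually.of_forall fun y => mul_comm _ _)
    have hconv : Integrable (fun x : Rn n =>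
        ∫ y, ⇑f y * (((β ^ n)⁻¹ * φ (β⁻¹ • (x - y)) : ℝ) : ℂ)) volume := by
      have := hfint.integrable_convolution (ContinuousLinearMap.mul ℂ ℂ) hg
      convert this using 1; funext x; simp [convolution_def, ContinuousLinearMap.mul_apply']
    have hCae : ⇑(C β f) =ᵐ[volume] fun x =>
        ∫ y, ⇑f y * (((β ^ n)⁻¹ * φ (β⁻¹ • (x - y)) : ℝ) : ℂ) :=
      (hC β hβ f).trans (by rw [hmoll])
    have hCint : Integrable ⇑(C β f) volume := hconv.congr hCae.symm
    have h1 : ⇑(F (C β f)) =ᵐ[volume] 𝓕 ⇑(C β f) := hF _ hCint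
    have h2 : 𝓕 ⇑(C β f) = 𝓕 (fun x : Rn n =>
        ∫ y, ⇑f y * (((β ^ n)⁻¹ * φ (β⁻¹ • (x - y)) : ℝ) : ℂ)) :=
      fourierIntegral_congr_ae hCae
    have h3 : ∀ ξ, 𝓕 (fun x : Rn n =>
        ∫ y, ⇑f y * (((β ^ n)⁻¹ * φ (β⁻¹ • (x - y)) : ℝ) : ℂ)) ξ
        = 𝓕 ⇑f ξ * phiHat n φ (β • ξ) := fun ξ => by
      rw [fourier_conv hfint hg ξ, fourier_scale hβ ξ]
    have h4 : ⇑(F f) =ᵐ[volume] 𝓕 ⇑f := hF f hfint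
    apply Lp.ext (p := (2 : ℝ≥0∞)) (μ := (volume : Measure (Rn n)))
    filter_upwards [h1, mulLp_coe hψc hψb (F f), h4] with ξ e1 e2 e4
    rw [e1, h2, h3 ξ, e2, e4, mul_comm]
  intro f
  have hdr := MeasureTheory.Lp.simpleFunc.denseRange
    (E := ℂ) (μ := (volume : Measure (Rn n))) (p := 2) (by norm_num)
  refine hdr.induction_on (p := fun f => F (C β f) = mulLp hψc hψb (F f)) f ?_ ?_
  · exact isClosed_eq (F.continuous.comp (C β).continuous)
      ((mulLp_lip hψc hψb).continuous.comp F.continuous)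
  · intro a
    apply key
    have hint : Integrable (⇑(Lp.simpleFunc.toSimpleFunc a)) volume := by
      have := (MeasureTheory.SimpleFunc.memLp_iff_integrable
        (p := 2) (by norm_num) (by norm_num)).mp (Lp.simpleFunc.memLp a)
      exact this
    exact hint.congr (Lp.simpleFunc.toSimpleFunc_eq_toFun a)

lemma F_A_identity
    {φ : Rn n → ℝ} (hφint : Integrable φ (volume : Measure (Rn n)))
    (F : L2 n ≃ₗᵢ[ℂ] L2 n)
    (hF : ∀ f : L2 n, Integrable (⇑f) volume →
      ⇑(F f) =ᵐ[volume] FourierTransform.fourier (⇑f))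
    (C : ℝ → (L2 n →L[ℂ] L2 n))
    (hC : ∀ β : ℝ, 0 < β → ∀ f : L2 n, ⇑(C β f) =ᵐ[volume] mollify n φ β ⇑f)
    {β : ℝ} (hβ : 0 < β)
    (hψc : Continuous (fun ξ : Rn n => phiHat n φ (β • ξ)))
    (hψb : ∀ ξ : Rn n, ‖phiHat n φ (β • ξ)‖ ≤ 2)
    (hwc : Continuous (fun ξ : Rn n => 1 - phiHat n φ (β • ξ)))
    (hwb : ∀ ξ : Rn n, ‖1 - phiHat n φ (β • ξ)‖ ≤ 2) :
    ∀ f : L2 n, F ((ContinuousLinearMap.id ℂ (L2 n) - C β) f) = mulLp hwc hwb (F f) := by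
  intro f
  have h0 : (ContinuousLinearMap.id ℂ (L2 n) - C β) f = f - C β f := by
    rw [ContinuousLinearMap.sub_apply, ContinuousLinearMap.id_apply]
  rw [h0, map_sub, F_mul_identity hφint F hF C hC hβ hψc hψb f]
  apply Lp.ext (p := (2 : ℝ≥0∞)) (μ := (volume : Measure (Rn n)))
  filter_upwards [Lp.coeFn_sub (F f) (mulLp hψc hψb (F f)), mulLp_coe hψc hψb (F f),
    mulLp_coe hwc hwb (F f)] with ξ e1 e2 e3
  rw [e1, Pi.sub_apply, e2, e3]
  ring

lemma adjoint_A_identity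
    {φ : Rn n → ℝ} (hφint : Integrable φ (volume : Measure (Rn n)))
    (F : L2 n ≃ₗᵢ[ℂ] L2 n)
    (hF : ∀ f : L2 n, Integrable (⇑f) volume →
      ⇑(F f) =ᵐ[volume] FourierTransform.fourier (⇑f))
    (C : ℝ → (L2 n →L[ℂ] L2 n))
    (hC : ∀ β : ℝ, 0 < β → ∀ f : L2 n, ⇑(C β f) =ᵐ[volume] mollify n φ β ⇑f)
    {β : ℝ} (hβ : 0 < β)
    (hψc : Continuous (fun ξ : Rn n => phiHat n φ (β • ξ)))
    (hψb : ∀ ξ : Rn n, ‖phiHat n φ (β • ξ)‖ ≤ 2)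
    (hwc : Continuous (fun ξ : Rn n => 1 - phiHat n φ (β • ξ)))
    (hwb : ∀ ξ : Rn n, ‖1 - phiHat n φ (β • ξ)‖ ≤ 2)
    (hwbc : Continuous (fun ξ : Rn n => (starRingEnd ℂ) (1 - phiHat n φ (β • ξ))))
    (hwbb : ∀ ξ : Rn n, ‖(starRingEnd ℂ) (1 - phiHat n φ (β • ξ))‖ ≤ 2) :
    ∀ g : L2 n, adjoint (ContinuousLinearMap.id ℂ (L2 n) - C β) g
      = F.symm (mulLp hwbc hwbb (F g)) := by
  intro g
  apply ext_inner_right ℂ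
  intro h
  rw [ContinuousLinearMap.adjoint_inner_left]
  rw [← F.inner_map_map g ((ContinuousLinearMap.id ℂ (L2 n) - C β) h)]
  rw [F_A_identity hφint F hF C hC hβ hψc hψb hwc hwb h]
  rw [← F.inner_map_map (F.symm (mulLp hwbc hwbb (F g))) h,
    F.apply_symm_apply]
  rw [L2.inner_def, L2.inner_def]
  apply integral_congr_ae
  filter_upwards [mulLp_coe hwc hwb (F h), mulLp_coe hwbc hwbb (F g)] with ξ e1 e2
  rw [e1, e2]
  simp only [RCLike.inner_apply, map_mul, RingHomCompTriple.comp_apply,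
    RingHom.id_apply, Complex.conj_conj]
  ring

theorem stmt8
    (n : ℕ) (hn : 0 < n) (s : ℝ) (hs : 0 < s)
    (φ : Rn n → ℝ) (hφint : Integrable φ (volume : Measure (Rn n)))
    (hφ1 : ∫ x, φ x = 1)
    (hreal : ∀ ξ : Rn n, (phiHat n φ ξ).im = 0)
    (hdec : ∀ ξ η : Rn n, ‖ξ‖ ≤ ‖η‖ → (phiHat n φ η).re ≤ (phiHat n φ ξ).re)
    (hlt : ∀ ξ : Rn n, ξ ≠ 0 → ‖phiHat n φ ξ‖ < 1)
    (hasymp : Tendsto (fun ξ : Rn n => ‖1 - phiHat n φ ξ‖ / ‖ξ‖ ^ s) (𝓝[≠] 0) (𝓝 1))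
    -- the Fourier–Plancherel transform on L², used to express the H^p norm
    (F : L2 n ≃ₗᵢ[ℂ] L2 n)
    (hF : ∀ f : L2 n, Integrable (⇑f) volume →
      ⇑(F f) =ᵐ[volume] FourierTransform.fourier (⇑f))
    -- the convolution operators C_β
    (C : ℝ → (L2 n →L[ℂ] L2 n))
    (hC : ∀ β : ℝ, 0 < β → ∀ f : L2 n, ⇑(C β f) =ᵐ[volume] mollify n φ β ⇑f)
    (p : ℝ) (hp : 0 < p) :
    ∃ C₂ : ℝ, 0 < C₂ ∧
      ∀ β ∈ Set.Ioc (0 : ℝ) 1, ∀ f : L2 n,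
        Integrable (fun ξ : Rn n => (1 + ‖ξ‖ ^ 2) ^ (2 * p) * ‖(F f : Rn n → ℂ) ξ‖ ^ 2)
          volume →
        ‖(adjoint (ContinuousLinearMap.id ℂ (L2 n) - C β))
            ((ContinuousLinearMap.id ℂ (L2 n) - C β) f)‖ ^ 2 ≤
          C₂ * β ^ (4 * min p s) *
            ∫ ξ : Rn n, (1 + ‖ξ‖ ^ 2) ^ (2 * p) * ‖(F f : Rn n → ℂ) ξ‖ ^ 2 := by
  obtain ⟨K, hK1, hKb⟩ := kernel_bound hs hφ1 hlt hasymp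
  set m := min p s with hm
  have hm0 : 0 < m := lt_min hp hs
  have hmp : m ≤ p := min_le_left _ _
  have hms : m ≤ s := min_le_right _ _
  refine ⟨K ^ 4, by positivity, ?_⟩
  rintro β ⟨hβ0, hβ1⟩ f hSob
  have hψc : Continuous (fun ξ : Rn n => phiHat n φ (β • ξ)) :=
    (phiHat_cont hφint).comp (continuous_id.const_smul β)
  have hψb : ∀ ξ : Rn n, ‖phiHat n φ (β • ξ)‖ ≤ 2 :=
    fun ξ => le_trans (phiHat_norm_le hφ1 hlt _) one_le_two
  have hwc : Continuous (fun ξ : Rn n => 1 - phiHat n φ (β • ξ)) :=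
    continuous_const.sub hψc
  have hwb : ∀ ξ : Rn n, ‖1 - phiHat n φ (β • ξ)‖ ≤ 2 :=
    fun ξ => one_sub_phiHat_le_two hφ1 hlt _
  have hwbc : Continuous (fun ξ : Rn n => (starRingEnd ℂ) (1 - phiHat n φ (β • ξ))) :=
    Complex.continuous_conj.comp hwc
  have hwbb : ∀ ξ : Rn n, ‖(starRingEnd ℂ) (1 - phiHat n φ (β • ξ))‖ ≤ 2 := fun ξ => by
    rw [RCLike.norm_conj]; exact hwb ξ
  have hpt : ∀ ξ : Rn n, ∀ c : ℂ,
      ‖(starRingEnd ℂ) (1 - phiHat n φ (β • ξ)) * ((1 - phiHat n φ (β • ξ)) * c)‖ ^ 2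
        ≤ K ^ 4 * β ^ (4 * m) * ((1 + ‖ξ‖ ^ 2) ^ (2 * p) * ‖c‖ ^ 2) := by
    intro ξ c
    have ht : (0:ℝ) ≤ ‖ξ‖ := norm_nonneg _
    have hw4 : ‖1 - phiHat n φ (β • ξ)‖ ≤ K * (β * ‖ξ‖) ^ m := by
      refine le_trans (hKb (β • ξ)) ?_
      have hn' : ‖β • ξ‖ = β * ‖ξ‖ := by
        rw [norm_smul, Real.norm_eq_abs, abs_of_pos hβ0]
      rw [hn']
      exact mul_le_mul_of_nonneg_left (min_rpow_le hm0 hms (by positivity))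
        (by linarith)
    have e0 : ‖(starRingEnd ℂ) (1 - phiHat n φ (β • ξ)) * ((1 - phiHat n φ (β • ξ)) * c)‖
        = ‖1 - phiHat n φ (β • ξ)‖ * (‖1 - phiHat n φ (β • ξ)‖ * ‖c‖) := by
      rw [norm_mul, norm_mul, RCLike.norm_conj]
    rw [e0]
    have e1 : (‖1 - phiHat n φ (β • ξ)‖ * (‖1 - phiHat n φ (β • ξ)‖ * ‖c‖)) ^ 2
        = (‖1 - phiHat n φ (β • ξ)‖ ^ 2) ^ 2 * ‖c‖ ^ 2 := by ring
    rw [e1]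
    have e2 : (‖1 - phiHat n φ (β • ξ)‖ ^ 2) ^ 2 ≤ ((K * (β * ‖ξ‖) ^ m) ^ 2) ^ 2 := by
      have h1 := pow_le_pow_left₀ (norm_nonneg _) hw4 2
      exact pow_le_pow_left₀ (by positivity) h1 2
    have e3 : ((K * (β * ‖ξ‖) ^ m) ^ 2) ^ 2
        ≤ K ^ 4 * β ^ (4 * m) * (1 + ‖ξ‖ ^ 2) ^ (2 * p) := by
      have h4 : ((K * (β * ‖ξ‖) ^ m) ^ 2) ^ 2 = K ^ 4 * ((β * ‖ξ‖) ^ m) ^ (4:ℕ) := by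
        ring
      rw [h4]
      have h5 : ((β * ‖ξ‖) ^ m) ^ (4:ℕ) = (β * ‖ξ‖) ^ (m * 4) := by
        rw [← Real.rpow_natCast ((β * ‖ξ‖) ^ m) 4, ← Real.rpow_mul (by positivity)]
        norm_num
      rw [h5, Real.mul_rpow hβ0.le ht]
      have h6 : β ^ (m * 4) = β ^ (4 * m) := by rw [mul_comm]
      have h7 : ‖ξ‖ ^ (m * 4) ≤ (1 + ‖ξ‖ ^ 2) ^ (2 * p) := by
        have h8 : ‖ξ‖ ^ (m * 4) = ((‖ξ‖ : ℝ) ^ (2:ℕ)) ^ (2 * m) := by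
          rw [← Real.rpow_natCast ‖ξ‖ 2, ← Real.rpow_mul ht]
          congr 1
          norm_num
          ring
        rw [h8]
        calc ((‖ξ‖ : ℝ) ^ (2:ℕ)) ^ (2 * m) ≤ (1 + ‖ξ‖ ^ 2) ^ (2 * m) := by
              apply Real.rpow_le_rpow (by positivity) _ (by positivity)
              nlinarith [sq_nonneg ‖ξ‖]
          _ ≤ (1 + ‖ξ‖ ^ 2) ^ (2 * p) := by
              apply Real.rpow_le_rpow_of_exponent_le _ (by linarith)
              nlinarith [sq_nonneg ‖ξ‖]
      calc K ^ 4 * (β ^ (m * 4) * ‖ξ‖ ^ (m * 4))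
          = K ^ 4 * β ^ (4 * m) * ‖ξ‖ ^ (m * 4) := by rw [h6]; ring
        _ ≤ K ^ 4 * β ^ (4 * m) * (1 + ‖ξ‖ ^ 2) ^ (2 * p) := by
            apply mul_le_mul_of_nonneg_left h7 (by positivity)
    calc (‖1 - phiHat n φ (β • ξ)‖ ^ 2) ^ 2 * ‖c‖ ^ 2
        ≤ (K ^ 4 * β ^ (4 * m) * (1 + ‖ξ‖ ^ 2) ^ (2 * p)) * ‖c‖ ^ 2 :=
          mul_le_mul_of_nonneg_right (le_trans e2 e3) (by positivity)
      _ = K ^ 4 * β ^ (4 * m) * ((1 + ‖ξ‖ ^ 2) ^ (2 * p) * ‖c‖ ^ 2) := by ring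
  rw [adjoint_A_identity hφint F hF C hC hβ0 hψc hψb hwc hwb hwbc hwbb,
    F_A_identity hφint F hF C hC hβ0 hψc hψb hwc hwb f,
    LinearIsometryEquiv.norm_map, L2_norm_sq]
  calc ∫ ξ, ‖(mulLp hwbc hwbb (mulLp hwc hwb (F f))) ξ‖ ^ 2
      ≤ ∫ ξ : Rn n, K ^ 4 * β ^ (4 * m)
          * ((1 + ‖ξ‖ ^ 2) ^ (2 * p) * ‖(F f : Rn n → ℂ) ξ‖ ^ 2) := by
        apply integral_mono_of_nonneg
        · exact Filter.Eventually.of_forall fun ξ => by positivity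
        · exact hSob.const_mul _
        · filter_upwards [mulLp_coe hwbc hwbb (mulLp hwc hwb (F f)),
            mulLp_coe hwc hwb (F f)] with ξ e1 e2
          rw [e1, e2]
          exact hpt ξ _
    _ = K ^ 4 * β ^ (4 * m)
          * ∫ ξ : Rn n, (1 + ‖ξ‖ ^ 2) ^ (2 * p) * ‖(F f : Rn n → ℂ) ξ‖ ^ 2 :=
        integral_const_mul _ _
end
end
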